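/- Suppose -log(1 - F₀(x)) = (log x)²/(2σ²) + A + B(log x)^{-β} as x → ∞ (log-normal type tail), with σ > 0, A, B real, β > 0. Then Φ⁻¹(F₀(x)) = (log x)/σ + C + o(1) as x → ∞ for some constant C, where Φ⁻¹ is the standard normal quantile function; in particular Φ⁻¹(F₀(x))/log x → 1/σ. -/

import Mathlib

open Filter ProbabilityTheory

open Topology

namespace Stmt16Aux

open MeasureTheory Set

noncomputable def g (t : ℝ) : ℝ := (Real.sqrt (2 * Real.pi))⁻¹ * Real.exp (-t ^ 2 / 2)

lemma g_eq : gaussianPDFReal 0 1 = g := by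
  ext x
  simp [gaussianPDFReal, g]

lemma g_pos (t : ℝ) : 0 < g t := by
  have h : (0:ℝ) < Real.sqrt (2 * Real.pi) := Real.sqrt_pos.2 (by positivity)
  exact mul_pos (inv_pos.2 h) (Real.exp_pos _)

lemma sqrt_two_pi_ge_one : (1:ℝ) ≤ Real.sqrt (2 * Real.pi) := by
  rw [show (1:ℝ) = Real.sqrt 1 by simp]
  exact Real.sqrt_le_sqrt (by nlinarith [Real.pi_gt_three])

lemma g_le (t : ℝ) : g t ≤ (Real.sqrt (2 * Real.pi))⁻¹ := by
  have h : Real.exp (-t ^ 2 / 2) ≤ 1 := by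
    rw [show (1:ℝ) = Real.exp 0 by simp]
    exact Real.exp_le_exp.2 (by nlinarith [sq_nonneg t])
  have hK : (0:ℝ) < (Real.sqrt (2 * Real.pi))⁻¹ := by
    have : (0:ℝ) < Real.sqrt (2 * Real.pi) := Real.sqrt_pos.2 (by positivity)
    positivity
  calc g t ≤ (Real.sqrt (2 * Real.pi))⁻¹ * 1 := by
        exact mul_le_mul_of_nonneg_left h hK.le
    _ = _ := by ring

lemma g_integrable : Integrable g := g_eq ▸ integrable_gaussianPDFReal 0 1

lemma g_total : ∫ t, g t = 1 := g_eq ▸ integral_gaussianPDFReal_eq_one 0 one_ne_zero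

lemma Phi_eq (z : ℝ) : ((gaussianReal 0 1) (Set.Iic z)).toReal = ∫ t in Set.Iic z, g t := by
  rw [gaussianReal_apply_eq_integral 0 one_ne_zero, g_eq,
    ENNReal.toReal_ofReal (integral_nonneg fun t => (g_pos t).le)]

lemma tail_eq (z : ℝ) : 1 - ∫ t in Set.Iic z, g t = ∫ t in Set.Ioi z, g t := by
  have h := intervalIntegral.integral_Iic_add_Ioi (b := z)
    g_integrable.integrableOn g_integrable.integrableOn
  rw [g_total] at h
  linarith

lemma cont : Continuous (fun z => ∫ t in Set.Iic z, g t) := by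
  have hK : (0:ℝ) ≤ (Real.sqrt (2 * Real.pi))⁻¹ := by positivity
  refine LipschitzWith.continuous (K := ⟨(Real.sqrt (2 * Real.pi))⁻¹, hK⟩)
    (LipschitzWith.of_dist_le_mul fun a b => ?_)
  rw [Real.dist_eq, Real.dist_eq, intervalIntegral.integral_Iic_sub_Iic
    g_integrable.integrableOn g_integrable.integrableOn]
  have := intervalIntegral.norm_integral_le_of_norm_le_const
    (a := b) (b := a) (f := g) (C := (Real.sqrt (2 * Real.pi))⁻¹) ?_
  · show _ ≤ (Real.sqrt (2 * Real.pi))⁻¹ * _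
    simpa [Real.norm_eq_abs, abs_sub_comm] using this
  · intro x _
    rw [Real.norm_eq_abs, abs_of_pos (g_pos x)]
    exact g_le x

lemma tail_upper {s : ℝ} (hs : 1 ≤ s) :
    ∫ u in Set.Ioi s, g u ≤ Real.exp (-(s ^ 2 / 2)) := by
  have hK0 : (0:ℝ) < Real.sqrt (2 * Real.pi) := Real.sqrt_pos.2 (by positivity)
  set c : ℝ := (Real.sqrt (2 * Real.pi))⁻¹ * Real.exp (-(s ^ 2 / 2)) * Real.exp s with hc
  have hexpint : IntegrableOn (fun u : ℝ => Real.exp (-u)) (Set.Ioi s) := by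
    simpa using exp_neg_integrableOn_Ioi s one_pos
  have hint : IntegrableOn (fun u : ℝ => c * Real.exp (-u)) (Set.Ioi s) :=
    hexpint.const_mul c
  have h1 : ∫ u in Set.Ioi s, g u ≤ ∫ u in Set.Ioi s, c * Real.exp (-u) := by
    refine setIntegral_mono_on g_integrable.integrableOn hint measurableSet_Ioi ?_
    intro u hu
    simp only [Set.mem_Ioi] at hu
    rw [g, hc, mul_assoc, mul_assoc, ← Real.exp_add, ← Real.exp_add]
    refine mul_le_mul_of_nonneg_left (Real.exp_le_exp.2 ?_) (by positivity)
    nlinarith [mul_nonneg (by linarith : (0:ℝ) ≤ u - s) (by linarith : (0:ℝ) ≤ u + s - 2)]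
  have h2 : ∫ u in Set.Ioi s, c * Real.exp (-u) = c * Real.exp (-s) := by
    rw [MeasureTheory.integral_const_mul, integral_exp_neg_Ioi]
  have h3 : c * Real.exp (-s) = (Real.sqrt (2 * Real.pi))⁻¹ * Real.exp (-(s ^ 2 / 2)) := by
    rw [hc, mul_assoc, ← Real.exp_add]
    simp
  have h4 : (Real.sqrt (2 * Real.pi))⁻¹ * Real.exp (-(s ^ 2 / 2)) ≤ Real.exp (-(s ^ 2 / 2)) := by
    have : (Real.sqrt (2 * Real.pi))⁻¹ ≤ 1 := by
      rw [inv_le_one_iff₀]; right; exact sqrt_two_pi_ge_one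
    nlinarith [Real.exp_pos (-(s ^ 2 / 2))]
  rw [h2, h3] at h1
  linarith

lemma tail_lower {t : ℝ} (ht : 1 ≤ t) :
    Real.exp (-(t ^ 2 / 2) - Real.log t - Real.log (Real.sqrt (2 * Real.pi)) - 3 / 2)
      ≤ ∫ u in Set.Ioi t, g u := by
  have htpos : (0:ℝ) < t := by linarith
  have hti : t⁻¹ ≤ 1 := by
    rw [inv_le_one_iff₀]; right; exact ht
  have htinv : (0:ℝ) < t⁻¹ := by positivity
  have hK0 : (0:ℝ) < Real.sqrt (2 * Real.pi) := Real.sqrt_pos.2 (by positivity)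
  have hmul : t * t⁻¹ = 1 := mul_inv_cancel₀ (ne_of_gt htpos)
  have hA : Real.exp (-(t ^ 2 / 2) - Real.log t - Real.log (Real.sqrt (2 * Real.pi)) - 3 / 2)
      ≤ t⁻¹ * g (t + t⁻¹) := by
    have e1 : Real.exp (-Real.log t) = t⁻¹ := by
      rw [Real.exp_neg, Real.exp_log htpos]
    have e2 : Real.exp (-Real.log (Real.sqrt (2 * Real.pi))) = (Real.sqrt (2 * Real.pi))⁻¹ := by
      rw [Real.exp_neg, Real.exp_log hK0]
    have heq : Real.exp (-(t ^ 2 / 2) - Real.log t - Real.log (Real.sqrt (2 * Real.pi)) - 3 / 2)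
        = t⁻¹ * ((Real.sqrt (2 * Real.pi))⁻¹ * Real.exp (-(t ^ 2 / 2) - 3 / 2)) := by
      rw [← e1, ← e2, ← Real.exp_add, ← Real.exp_add]
      ring_nf
    rw [heq, g]
    refine mul_le_mul_of_nonneg_left (mul_le_mul_of_nonneg_left (Real.exp_le_exp.2 ?_)
      (by positivity)) htinv.le
    have hsq : (t + t⁻¹) ^ 2 = t ^ 2 + 2 + t⁻¹ ^ 2 := by
      have h' : (t + t⁻¹) ^ 2 = t ^ 2 + 2 * (t * t⁻¹) + t⁻¹ ^ 2 := by ring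
      rw [h', hmul]; ring
    nlinarith [sq_nonneg t⁻¹, hti, htinv]
  have hB : t⁻¹ * g (t + t⁻¹) ≤ ∫ u in Set.Ioc t (t + t⁻¹), g u := by
    have hconst : ∫ _u in Set.Ioc t (t + t⁻¹), g (t + t⁻¹) = t⁻¹ * g (t + t⁻¹) := by
      rw [setIntegral_const, measureReal_def, Real.volume_Ioc, show t + t⁻¹ - t = t⁻¹ by ring,
        ENNReal.toReal_ofReal htinv.le, smul_eq_mul]
    rw [← hconst]
    refine setIntegral_mono_on (integrableOn_const ?_) g_integrable.integrableOn
      measurableSet_Ioc ?_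
    · rw [Real.volume_Ioc]; exact ENNReal.ofReal_ne_top
    · intro u hu
      simp only [Set.mem_Ioc] at hu
      rw [g, g]
      refine mul_le_mul_of_nonneg_left (Real.exp_le_exp.2 ?_) (by positivity)
      have hu0 : 0 < u := lt_trans htpos hu.1
      nlinarith [hu.1, hu.2, hu0]
  have hC : ∫ u in Set.Ioc t (t + t⁻¹), g u ≤ ∫ u in Set.Ioi t, g u := by
    refine setIntegral_mono_set g_integrable.integrableOn
      (Eventually.of_forall fun u => (g_pos u).le) ?_
    exact HasSubset.Subset.eventuallyLE Set.Ioc_subset_Ioi_self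
  linarith

end Stmt16Aux

/-- Log-normal type tails: if `-log(1-F₀(x)) = (log x)²/(2σ²) + A + B (log x)^{-β}` as
`x → ∞`, then `Φ⁻¹(F₀(x)) = (log x)/σ + C + o(1)` for some constant `C`, where `Φ` is the
standard normal CDF; in particular `Φ⁻¹(F₀(x))/log x → 1/σ`. -/
theorem stmt_16 (F₀ : ℝ → ℝ) (σ A B β : ℝ) (hσ : 0 < σ) (hβ : 0 < β)
    (hF : ∀ᶠ x in atTop, -Real.log (1 - F₀ x)
      = (Real.log x) ^ 2 / (2 * σ ^ 2) + A + B * (Real.log x) ^ (-β))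
    (hF₀lt : ∀ᶠ x in atTop, 0 < F₀ x ∧ F₀ x < 1)
    (Φ : ℝ → ℝ) (hΦ : ∀ z, Φ z = ((gaussianReal 0 1) (Set.Iic z)).toReal)
    (Φinv : ℝ → ℝ) (hΦinv : ∀ z, Φinv (Φ z) = z) :
    (∃ C : ℝ, ∃ ε : ℝ → ℝ, Tendsto ε atTop (nhds 0) ∧
      ∀ᶠ x in atTop, Φinv (F₀ x) = Real.log x / σ + C + ε x) ∧
    Tendsto (fun x => Φinv (F₀ x) / Real.log x) atTop (nhds (1 / σ)) := by
  have hne : σ ≠ 0 := ne_of_gt hσ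
  set F : ℝ → ℝ := fun z => ∫ t in Set.Iic z, Stmt16Aux.g t with hFdef
  have hΦF : ∀ z, Φ z = F z := fun z => by rw [hΦ z, Stmt16Aux.Phi_eq]
  have hksqrt : 0 ≤ Real.log (Real.sqrt (2 * Real.pi)) :=
    Real.log_nonneg Stmt16Aux.sqrt_two_pi_ge_one
  -- key claim
  have hkey : ∀ δ : ℝ, 0 < δ → ∀ᶠ x in atTop, |Φinv (F₀ x) - Real.log x / σ| ≤ δ := by
    intro δ hδ
    have hb2 : ∀ᶠ L in (atTop : Filter ℝ), |B * L ^ (-β)| < 1 := by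
      have h : Tendsto (fun L : ℝ => B * L ^ (-β)) atTop (𝓝 (B * 0)) :=
        (tendsto_rpow_neg_atTop hβ).const_mul B
      rw [mul_zero] at h
      have := Metric.tendsto_nhds.mp h 1 one_pos
      simpa [Real.dist_eq, abs_mul] using this
    have hc : ∀ᶠ L in (atTop : Filter ℝ), |Real.log L| ≤ δ / (2 * σ) * |L| := by
      have := Real.isLittleO_log_id_atTop.bound (c := δ / (2 * σ)) (by positivity)
      simpa [Real.norm_eq_abs] using this
    have hd : ∀ᶠ L in (atTop : Filter ℝ),
        |A| + 1 + |Real.log σ| + δ ^ 2 + 2 + Real.log (Real.sqrt (2 * Real.pi))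
          ≤ δ / (2 * σ) * L := by
      have ht : Tendsto (fun L : ℝ => δ / (2 * σ) * L) atTop atTop :=
        Tendsto.const_mul_atTop (by positivity) tendsto_id
      exact ht.eventually_ge_atTop _
    have ha : ∀ᶠ L in (atTop : Filter ℝ), σ * (1 + δ) ≤ L ∧ 1 ≤ L :=
      (eventually_ge_atTop _).and (eventually_ge_atTop _)
    filter_upwards [hF, hF₀lt, Real.tendsto_log_atTop.eventually hb2,
      Real.tendsto_log_atTop.eventually hc, Real.tendsto_log_atTop.eventually hd,
      Real.tendsto_log_atTop.eventually ha] with x hFx hy hB1 hlogabs hCb hL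
    obtain ⟨hy0, hy1⟩ := hy
    obtain ⟨hLσ, hL1⟩ := hL
    set L := Real.log x with hLdef
    have hLpos : (0:ℝ) < L := lt_of_lt_of_le one_pos hL1
    have hu1 : 1 + δ ≤ L / σ := (le_div_iff₀ hσ).2 (by rw [mul_comm]; exact hLσ)
    have ht1 : 1 ≤ L / σ - δ := by linarith
    have hs1 : 1 ≤ L / σ + δ := by linarith
    have hform : δ / (2 * σ) * L = δ / 2 * (L / σ) := by field_simp
    have hlogL : Real.log L ≤ δ / 2 * (L / σ) := by
      rw [← hform]
      rwa [abs_of_nonneg (Real.log_nonneg hL1), abs_of_pos hLpos] at hlogabs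
    have hC' : |A| + 1 + |Real.log σ| + δ ^ 2 + 2 + Real.log (Real.sqrt (2 * Real.pi))
        ≤ δ / 2 * (L / σ) := by rw [← hform]; exact hCb
    have hBle := abs_lt.1 hB1
    have hypos : 0 < 1 - F₀ x := by linarith
    have h1y : 1 - F₀ x = Real.exp (-(L ^ 2 / (2 * σ ^ 2) + A + B * L ^ (-β))) := by
      rw [← Real.exp_log hypos]
      congr 1
      linarith [hFx]
    have hsq : L ^ 2 / (2 * σ ^ 2) = (L / σ) ^ 2 / 2 := by
      field_simp
    have htpos : 0 < L / σ - δ := by linarith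
    have hlogt : Real.log (L / σ - δ) ≤ Real.log L - Real.log σ := by
      have h1 : Real.log (L / σ - δ) ≤ Real.log (L / σ) :=
        (Real.log_le_log_iff htpos (by linarith)).2 (by linarith)
      rwa [Real.log_div (ne_of_gt hLpos) hne] at h1
    -- lower tail comparison
    have harg1 : -(L ^ 2 / (2 * σ ^ 2) + A + B * L ^ (-β))
        ≤ -((L / σ - δ) ^ 2 / 2) - Real.log (L / σ - δ)
          - Real.log (Real.sqrt (2 * Real.pi)) - 3 / 2 := by
      rw [hsq]
      linarith [hlogt, hlogL, hC', hBle.1, neg_abs_le A, neg_abs_le (Real.log σ),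
        sq_nonneg δ]
    have hexp1 : Real.exp (-(L ^ 2 / (2 * σ ^ 2) + A + B * L ^ (-β)))
        ≤ ∫ u in Set.Ioi (L / σ - δ), Stmt16Aux.g u :=
      le_trans (Real.exp_le_exp.2 harg1) (Stmt16Aux.tail_lower ht1)
    -- upper tail comparison
    have harg2 : -((L / σ + δ) ^ 2 / 2) ≤ -(L ^ 2 / (2 * σ ^ 2) + A + B * L ^ (-β)) := by
      rw [hsq]
      linarith [hC', hBle.2, le_abs_self A, abs_nonneg (Real.log σ), hksqrt,
        sq_nonneg δ, abs_nonneg A]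
    have hexp2 : ∫ u in Set.Ioi (L / σ + δ), Stmt16Aux.g u
        ≤ Real.exp (-(L ^ 2 / (2 * σ ^ 2) + A + B * L ^ (-β))) :=
      le_trans (Stmt16Aux.tail_upper hs1) (Real.exp_le_exp.2 harg2)
    -- F bounds
    have hFt : F (L / σ - δ) ≤ F₀ x := by
      have h := Stmt16Aux.tail_eq (L / σ - δ)
      have h2 : 1 - F (L / σ - δ) = ∫ u in Set.Ioi (L / σ - δ), Stmt16Aux.g u := h
      rw [← h2, ← h1y] at hexp1
      linarith
    have hFs : F₀ x ≤ F (L / σ + δ) := by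
      have h := Stmt16Aux.tail_eq (L / σ + δ)
      have h2 : 1 - F (L / σ + δ) = ∫ u in Set.Ioi (L / σ + δ), Stmt16Aux.g u := h
      rw [← h2, ← h1y] at hexp2
      linarith
    -- intermediate value theorem
    have hts : L / σ - δ ≤ L / σ + δ := by linarith
    have hIVT := intermediate_value_Icc hts (Stmt16Aux.cont.continuousOn)
    obtain ⟨z, hzmem, hz⟩ := hIVT ⟨hFt, hFs⟩
    have hzF : F z = F₀ x := hz
    have hinv : Φinv (F₀ x) = z := by rw [← hzF, ← hΦF z, hΦinv]
    rw [hinv, abs_le]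
    exact ⟨by linarith [hzmem.1], by linarith [hzmem.2]⟩
  -- conclude
  have hεt : Tendsto (fun x => Φinv (F₀ x) - Real.log x / σ) atTop (𝓝 0) := by
    rw [Metric.tendsto_nhds]
    intro e he
    filter_upwards [hkey (e / 2) (by linarith)] with x hx
    rw [Real.dist_eq, sub_zero]
    calc |Φinv (F₀ x) - Real.log x / σ| ≤ e / 2 := hx
      _ < e := by linarith
  refine ⟨⟨0, fun x => Φinv (F₀ x) - Real.log x / σ, hεt,
    Filter.Eventually.of_forall fun x => by ring⟩, ?_⟩
  have hinv0 : Tendsto (fun x : ℝ => (Real.log x)⁻¹) atTop (𝓝 0) :=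
    tendsto_inv_atTop_zero.comp Real.tendsto_log_atTop
  have hprod : Tendsto (fun x => (Φinv (F₀ x) - Real.log x / σ) * (Real.log x)⁻¹)
      atTop (𝓝 0) := by
    simpa using hεt.mul hinv0
  have hsum : Tendsto (fun x => 1 / σ + (Φinv (F₀ x) - Real.log x / σ) * (Real.log x)⁻¹)
      atTop (𝓝 (1 / σ)) := by
    simpa using tendsto_const_nhds.add hprod
  refine hsum.congr' ?_
  filter_upwards [Real.tendsto_log_atTop.eventually (eventually_ge_atTop (1:ℝ))] with x hx
  have hlne : Real.log x ≠ 0 := by linarith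
  field_simp
  ring
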